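/- arXiv:2403.08393 — 4 statements merged into one kernel-verified Lean document; each statement's English description precedes it below -/
import Mathlib

section
/- Let $(V,+,\cdot)$ be a commutative associative ring with $V^3=0$, and define $\tau_a(x)=x+x\cdot a+a$ and $\sigma_a(x)=x+a$. Then for all $a,b\in V$, the commutator $\sigma_a^{-1}\tau_b^{-1}\sigma_a\tau_b$ equals $\sigma_{a\cdot b}$. -/
/-- For a commutative associative ring `(V,+,·)` with `V³ = 0`, the commutator
`σ_a⁻¹ τ_b⁻¹ σ_a τ_b` (maps acting on the right, so composed left to right)
equals the translation `σ_{a·b}`. -/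
theorem commutator_sigma_tau
    (V : Type*) [NonUnitalCommRing V]
    (h3 : ∀ a b c : V, a * b * c = 0)
    (τ σ : V → V → V)
    (hτ : ∀ a x : V, τ a x = x + x * a + a)
    (hσ : ∀ a x : V, σ a x = x + a)
    (τi σi : V → V → V)
    (hτi : ∀ b : V, Function.LeftInverse (τi b) (τ b) ∧
      Function.RightInverse (τi b) (τ b))
    (hσi : ∀ a : V, Function.LeftInverse (σi a) (σ a) ∧
      Function.RightInverse (σi a) (σ a)) :
    ∀ a b x : V, τ b (σ a (τi b (σi a x))) = σ (a * b) x := by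
  have hσi' : ∀ a x : V, σi a x = x - a := by
    intro a x
    have h := (hσi a).1 (x - a)
    rw [hσ] at h
    simpa using h
  have hτi' : ∀ b z : V, τi b z = z - z * b - b + b * b := by
    intro b z
    have h := (hτi b).1 (z - z * b - b + b * b)
    rw [hτ] at h
    have e : z - z * b - b + b * b + (z - z * b - b + b * b) * b + b = z := by
      simp only [sub_mul, add_mul, h3]
      abel
    rwa [e] at h
  intro a b x
  rw [hσi', hτi', hσ, hτ, hσ]
  simp only [sub_mul, add_mul, h3]
  abel
end

section
/- Let $(V,+,\cdot)$ be a commutative associative ring with $V^3=0$. With $\tau_a(x)=x+x\cdot a+a$ and $\sigma_a(x)=x+a$, for all $a,b\in V$ we have $\sigma_a\circ\tau_b\circ\sigma_a^{-1}=\tau_{b+a\cdot b}$; in particular the translation group $T_+$ normalizes $T_\circ=\{\tau_c: c\in V\}$. -/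
/-- For a commutative associative ring `(V,+,·)` with `V³ = 0`, conjugating
`τ_b` by the translation `σ_a` (maps acting on the right) gives
`σ_a τ_b σ_a⁻¹ = τ_{b + a·b}`; in particular `T₊` normalizes `T∘ = {τ_c}`. -/
theorem sigma_conj_tau
    (V : Type*) [NonUnitalCommRing V]
    (h3 : ∀ a b c : V, a * b * c = 0)
    (τ σ : V → V → V)
    (hτ : ∀ a x : V, τ a x = x + x * a + a)
    (hσ : ∀ a x : V, σ a x = x + a)
    (σi : V → V → V)
    (hσi : ∀ a : V, Function.LeftInverse (σi a) (σ a) ∧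
      Function.RightInverse (σi a) (σ a)) :
    (∀ a b x : V, σi a (τ b (σ a x)) = τ (b + a * b) x) ∧
    (∀ a b : V, ∃ c : V, ∀ x : V, σi a (τ b (σ a x)) = τ c x) := by
  have hσi' : ∀ a y : V, σi a y = y - a := by
    intro a y
    have := (hσi a).1 (y - a)
    rw [hσ] at this
    simpa using this
  have key : ∀ a b x : V, σi a (τ b (σ a x)) = τ (b + a * b) x := by
    intro a b x
    rw [hσ, hτ, hσi', hτ]
    have h1 : x * (a * b) = 0 := by rw [← mul_assoc]; exact h3 x a b
    rw [mul_add, add_mul, h1]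
    abel
  exact ⟨key, fun a b => ⟨b + a * b, key a b⟩⟩
end

section
/- Let $b$ be a nondegenerate symmetric bilinear form on a finite-dimensional vector space over a finite field $\mathbb{F}_q$ of odd characteristic. Then there exists a basis in which the matrix of $b$ is diagonal with all diagonal entries equal to $1$, except possibly the last one, which equals a fixed nonsquare $s\in\mathbb{F}_q^\times$. -/
/-!
An orthogonal basis makes `M` congruent to `diagonal d` with every `d i ≠ 0`. Over a finite
field of odd order the binary form `a x² + b y²` (with `a b ≠ 0`) represents `1`; completing such
a vector to an orthogonal pair turns the block `diag(a, b)` into `diag(1, a b)`. Sweeping from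
left to right leaves `diag(1, …, 1, c)`, and since `c` is a square or `s` times a square,
rescaling the last basis vector gives `1` or `s`.
-/

open Matrix

namespace Matrix

variable {ι R : Type*} [Fintype ι] [CommRing R]

/-- `A` is not required to be invertible; it is automatically when `N` is
(`Congruent.exists_isUnit_det`). -/
def Congruent (M N : Matrix ι ι R) : Prop := ∃ A : Matrix ι ι R, A * M * Aᵀ = N

theorem Congruent.trans {M N P : Matrix ι ι R} (hMN : Congruent M N) (hNP : Congruent N P) :
    Congruent M P := by
  obtain ⟨A, rfl⟩ := hMN
  obtain ⟨B, rfl⟩ := hNP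
  exact ⟨B * A, by simp only [transpose_mul, Matrix.mul_assoc]⟩

variable [DecidableEq ι]

theorem Congruent.exists_isUnit_det {M N : Matrix ι ι R} (h : Congruent M N) (hN : IsUnit N.det) :
    ∃ A : Matrix ι ι R, IsUnit A.det ∧ A * M * Aᵀ = N := by
  obtain ⟨A, rfl⟩ := h
  rw [det_mul, det_mul, det_transpose, mul_assoc] at hN
  exact ⟨A, isUnit_of_mul_isUnit_left hN, rfl⟩

theorem mul_mul_transpose_apply (A M : Matrix ι ι R) (p q : ι) :
    (A * M * Aᵀ) p q = toBilin' M (A p) (A q) := by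
  simp only [toBilin'_apply, mul_apply, transpose_apply, Finset.sum_mul]
  exact Finset.sum_comm

theorem toBilin'_diagonal_single (d : ι → R) (a b : ι) (x y : R) :
    toBilin' (diagonal d) (Pi.single a x) (Pi.single b y) = if a = b then x * d a * y else 0 := by
  rw [toBilin'_apply']
  split_ifs with h
  · subst h
    simp [mul_comm]
  · simp [Ne.symm h]

theorem congruent_diagonal_mul_sq (d t : ι → R) :
    Congruent (diagonal d) (diagonal fun i => t i ^ 2 * d i) :=
  ⟨diagonal t, by
    rw [diagonal_transpose, diagonal_mul_diagonal, diagonal_mul_diagonal]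
    congr 1
    funext i
    ring⟩

theorem congruent_diagonal_update_update {d : ι → R} {i j : ι} (hij : i ≠ j) {x y : R}
    (h : d i * x ^ 2 + d j * y ^ 2 = 1) :
    Congruent (diagonal d) (diagonal (Function.update (Function.update d i 1) j (d i * d j))) := by
  -- rows `i` and `j` are orthogonal for `diagonal d`, of norms `1` and `d i * d j`
  let A : Matrix ι ι R := fun p =>
    if p = i then Pi.single i x + Pi.single j y
    else if p = j then Pi.single i (-(d j * y)) + Pi.single j (d i * x)
    else Pi.single p 1
  have hAi : A i = Pi.single i x + Pi.single j y := if_pos rfl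
  have hAj : A j = Pi.single i (-(d j * y)) + Pi.single j (d i * x) := by simp [A, hij.symm]
  have hA : ∀ p, p ≠ i → p ≠ j → A p = Pi.single p 1 := fun p hpi hpj => by simp [A, hpi, hpj]
  have trichotomy : ∀ p, p = i ∨ p = j ∨ p ≠ i ∧ p ≠ j ∧ i ≠ p ∧ j ≠ p := by tauto
  refine ⟨A, ?_⟩
  ext p q
  rw [mul_mul_transpose_apply, diagonal_apply]
  rcases trichotomy p with hp | hp | ⟨hpi, hpj, hip, hjp⟩ <;>
    rcases trichotomy q with hq | hq | ⟨hqi, hqj, hiq, hjq⟩ <;>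
    simp [*, toBilin'_diagonal_single, diagonal_apply, hij.symm]
  · linear_combination h
  · ring
  · ring
  · linear_combination d i * d j * h

variable {K : Type*} [Field K]

theorem congruent_diagonal_ite_of_eq_sq_mul (P : ι → Prop) [DecidablePred P] {c r w : K}
    (hr : r ≠ 0) (hc : c = r ^ 2 * w) :
    Congruent (diagonal fun i => if P i then c else 1) (diagonal fun i => if P i then w else 1) := by
  convert congruent_diagonal_mul_sq _ (fun i => if P i then r⁻¹ else 1) using 3 with i
  split_ifs
  · rw [hc]
    field_simp
  · ring

theorem IsSymm.exists_congruent_diagonal [Invertible (2 : K)] {M : Matrix ι ι K} (hM : M.IsSymm)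
    (hdet : M.det ≠ 0) : ∃ d : ι → K, (∀ i, d i ≠ 0) ∧ Congruent M (diagonal d) := by
  obtain ⟨v, hv⟩ := LinearMap.BilinForm.exists_orthogonal_basis
    (LinearMap.BilinForm.isSymm_iff.mp (isSymm_toBilin'_iff_isSymm.mpr hM))
  let e : ι ≃ Fin _ := Fintype.equivFinOfCardEq (Module.finrank_fintype_fun_eq_card K).symm
  let w := v.reindex e.symm
  have hw : (toBilin' M).IsOrthoᵢ w := fun i j hij => by
    simpa [w, Function.onFun] using hv (e.injective.ne hij)
  refine ⟨fun i => toBilin' M (w i) (w i),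
    hw.not_isOrtho_basis_self_of_separatingLeft
      (LinearMap.BilinForm.nondegenerate_toBilin'_of_det_ne_zero' M hdet).1,
    of fun i => w i, ?_⟩
  ext p q
  rw [mul_mul_transpose_apply, diagonal_apply]
  split_ifs with hpq
  · subst hpq
    rfl
  · exact hw hpq

end Matrix

namespace FiniteField

variable {F : Type*} [Field F] [Fintype F]

theorem exists_mul_sq_add_mul_sq_eq_one (hF : Fintype.card F % 2 = 1) {a b : F} (ha : a ≠ 0)
    (hb : b ≠ 0) : ∃ x y : F, a * x ^ 2 + b * y ^ 2 = 1 := by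
  open Polynomial in
  have hb2 : (C b * X ^ 2 : F[X]).degree = 2 := degree_C_mul_X_pow 2 hb
  obtain ⟨x, y, hxy⟩ := exists_root_sum_quadratic (f := C a * X ^ 2) (g := C b * X ^ 2 - C 1)
    (degree_C_mul_X_pow 2 ha) (by rw [degree_sub_C (by rw [hb2]; norm_num), hb2]) hF
  refine ⟨x, y, ?_⟩
  simp only [eval_mul, eval_pow, eval_C, eval_X, eval_sub] at hxy
  linear_combination hxy

theorem isSquare_or_isSquare_div {s : F} (hs : ¬IsSquare s) (c : F) :
    IsSquare c ∨ IsSquare (c / s) := by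
  classical
  have hs0 : s ≠ 0 := by
    rintro rfl
    exact hs .zero
  by_contra! ⟨hc, hcs⟩
  rw [← quadraticChar_neg_one_iff_not_isSquare] at hs hc hcs
  rw [← div_mul_cancel₀ c hs0, map_mul, hcs, hs] at hc
  norm_num at hc

end FiniteField

namespace Matrix

variable {F : Type*} [Field F] [Fintype F] {n : ℕ}

theorem exists_congruent_diagonal_eq_one_of_lt (hF : Fintype.card F % 2 = 1) {d : Fin n → F}
    (hd : ∀ i, d i ≠ 0) {k : ℕ} (hk : k < n) :
    ∃ e : Fin n → F, (∀ i, e i ≠ 0) ∧ (∀ i : Fin n, (i : ℕ) < k → e i = 1) ∧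
      Congruent (diagonal d) (diagonal e) := by
  induction k with
  | zero => exact ⟨d, hd, by simp, 1, by simp⟩
  | succ k ih =>
    obtain ⟨e, he, he1, hde⟩ := ih (by omega)
    let i : Fin n := ⟨k, by omega⟩
    let j : Fin n := ⟨k + 1, hk⟩
    have hij : i ≠ j := by simp [i, j, Fin.ext_iff]
    obtain ⟨x, y, hxy⟩ := FiniteField.exists_mul_sq_add_mul_sq_eq_one hF (he i) (he j)
    refine ⟨_, fun p => ?_, fun p hp => ?_, hde.trans (congruent_diagonal_update_update hij hxy)⟩
    · simp only [Function.update_apply]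
      split_ifs <;> simp [he]
    · have hpj : p ≠ j := by
        simp [j, Fin.ext_iff]
        omega
      rw [Function.update_of_ne hpj]
      rcases eq_or_ne p i with rfl | hpi
      · exact Function.update_self ..
      · rw [Function.update_of_ne hpi]
        exact he1 p (by simp [i, Fin.ext_iff] at hpi; omega)

theorem exists_congruent_diagonal_ite_last (hF : Fintype.card F % 2 = 1) (hn : 0 < n)
    {d : Fin n → F} (hd : ∀ i, d i ≠ 0) :
    ∃ c ≠ 0, Congruent (diagonal d)
      (diagonal fun i : Fin n => if (i : ℕ) = n - 1 then c else 1) := by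
  obtain ⟨e, he, he1, hde⟩ := exists_congruent_diagonal_eq_one_of_lt hF hd (k := n - 1) (by omega)
  refine ⟨e ⟨n - 1, by omega⟩, he _, ?_⟩
  convert hde using 3 with i
  split_ifs with hi
  · exact congrArg e (Fin.ext hi.symm)
  · exact (he1 i (by omega)).symm

end Matrix

/-- Over a finite field of odd order, every nondegenerate symmetric bilinear form
(given by an invertible symmetric Gram matrix `M`) admits a basis in which its
matrix is diagonal with all entries `1`, except possibly the last entry, which
is a fixed nonsquare `s`. -/
theorem diagonalization_finite_field
    (F : Type*) [Field F] [Fintype F] (hq : Odd (Fintype.card F))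
    (n : ℕ) (hn : 0 < n)
    (s : F) (hs : ¬ IsSquare s) (hs0 : s ≠ 0)
    (M : Matrix (Fin n) (Fin n) F) (hM : M.IsSymm) (hMdet : IsUnit M.det) :
    ∃ A : Matrix (Fin n) (Fin n) F, IsUnit A.det ∧
      (A * M * Aᵀ = 1 ∨
       A * M * Aᵀ = Matrix.diagonal (fun i : Fin n => if (i : ℕ) = n - 1 then s else 1)) := by
  have hF : Fintype.card F % 2 = 1 := Nat.odd_iff.mp hq
  have : Invertible (2 : F) :=
    invertibleOfNonzero (Ring.two_ne_zero (by rw [Ne, FiniteField.even_card_iff_char_two]; omega))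
  obtain ⟨d, hd, hMd⟩ := hM.exists_congruent_diagonal hMdet.ne_zero
  obtain ⟨c, hc, hdc⟩ := exists_congruent_diagonal_ite_last hF hn hd
  rcases FiniteField.isSquare_or_isSquare_div hs c with ⟨r, hr⟩ | ⟨r, hr⟩
  · have h := (hMd.trans hdc).trans (congruent_diagonal_ite_of_eq_sq_mul _ (w := 1)
      (right_ne_zero_of_mul (hr ▸ hc)) (by rw [hr]; ring))
    simp only [ite_self, diagonal_one] at h
    obtain ⟨A, hA, hAM⟩ := h.exists_isUnit_det (by simp)
    exact ⟨A, hA, Or.inl hAM⟩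
  · have h := (hMd.trans hdc).trans (congruent_diagonal_ite_of_eq_sq_mul _ (w := s)
      (right_ne_zero_of_mul (hr ▸ div_ne_zero hc hs0)) (by rw [sq, ← hr, div_mul_cancel₀ c hs0]))
    obtain ⟨A, hA, hAM⟩ :=
      h.exists_isUnit_det (by simp [det_diagonal, Finset.prod_ne_zero_iff, ite_eq_iff, hs0])
    exact ⟨A, hA, Or.inr hAM⟩
end

section
/- Two nondegenerate symmetric bilinear forms on finite-dimensional vector spaces over a finite field $\mathbb{F}_q$ of odd characteristic are equivalent (related by a linear isomorphism) if and only if they have the same dimension and their discriminants (determinants of Gram matrices) lie in the same coset of $(\mathbb{F}_q^\times)^2$ in $\mathbb{F}_q^\times$. -/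
/-!
Over a field in which `2` is invertible every symmetric matrix is congruent to a diagonal one.
Over a finite field of odd order every binary form `a x² + b y²` with `a b ≠ 0` represents `1`
(the value sets of `a x²` and `1 - b y²` each have `(q + 1) / 2` elements, so they meet), hence
`diag(a, b)` is congruent to `diag(1, a b)`. Sliding this move along the diagonal brings every
nondegenerate diagonal form to `diag(1, …, 1, δ)` with `δ` its determinant, and rescaling the last
basis vector multiplies `δ` by an arbitrary nonzero square. Conversely, a congruence `A M Aᵀ`
multiplies the determinant by the square `(det A)²`.
-/

open Matrix Polynomial

namespace Matrix

variable {ι κ R : Type*} [Fintype ι] [DecidableEq ι] [Fintype κ] [DecidableEq κ] [CommRing R]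

def IsCongr (M N : Matrix ι ι R) : Prop :=
  ∃ A : Matrix ι ι R, IsUnit A.det ∧ A * M * Aᵀ = N

namespace IsCongr

variable {M N P : Matrix ι ι R}

@[refl]
theorem refl (M : Matrix ι ι R) : IsCongr M M :=
  ⟨1, by simp, by simp⟩

theorem trans (h₁ : IsCongr M N) (h₂ : IsCongr N P) : IsCongr M P := by
  obtain ⟨A, hA, rfl⟩ := h₁
  obtain ⟨B, hB, rfl⟩ := h₂
  refine ⟨B * A, by simpa using hB.mul hA, ?_⟩
  simp only [transpose_mul, Matrix.mul_assoc]

theorem symm (h : IsCongr M N) : IsCongr N M := by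
  obtain ⟨A, hA, rfl⟩ := h
  refine ⟨A⁻¹, by simpa using hA, ?_⟩
  have hAt : IsUnit Aᵀ.det := by simpa using hA
  rw [transpose_nonsing_inv, Matrix.mul_assoc, Matrix.mul_assoc, mul_nonsing_inv _ hAt,
    Matrix.mul_one, ← Matrix.mul_assoc, nonsing_inv_mul _ hA, Matrix.one_mul]

theorem exists_det_eq_sq_mul (h : IsCongr M N) : ∃ c : R, IsUnit c ∧ N.det = c ^ 2 * M.det := by
  obtain ⟨A, hA, rfl⟩ := h
  exact ⟨A.det, hA, by rw [det_mul, det_mul, det_transpose]; ring⟩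

theorem reindex (e : ι ≃ κ) (h : IsCongr M N) :
    IsCongr (Matrix.reindex e e M) (Matrix.reindex e e N) := by
  obtain ⟨A, hA, rfl⟩ := h
  refine ⟨Matrix.reindex e e A, by rwa [det_reindex_self], ?_⟩
  rw [transpose_reindex]
  simp only [← coe_reindexAlgEquiv R R, map_mul]

theorem fromBlocks {M₁ N₁ : Matrix ι ι R} {M₂ N₂ : Matrix κ κ R} (h₁ : IsCongr M₁ N₁)
    (h₂ : IsCongr M₂ N₂) : IsCongr (fromBlocks M₁ 0 0 M₂) (fromBlocks N₁ 0 0 N₂) := by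
  obtain ⟨A₁, hA₁, rfl⟩ := h₁
  obtain ⟨A₂, hA₂, rfl⟩ := h₂
  refine ⟨Matrix.fromBlocks A₁ 0 0 A₂, by simpa using hA₁.mul hA₂, ?_⟩
  simp [fromBlocks_transpose, fromBlocks_multiply]

theorem diagonal_append {a b : ℕ} {d₁ e₁ : Fin a → R} {d₂ e₂ : Fin b → R}
    (h₁ : IsCongr (diagonal d₁) (diagonal e₁)) (h₂ : IsCongr (diagonal d₂) (diagonal e₂)) :
    IsCongr (diagonal (Fin.append d₁ d₂)) (diagonal (Fin.append e₁ e₂)) := by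
  have key (d : Fin a → R) (e : Fin b → R) : diagonal (Fin.append d e) =
      Matrix.reindex finSumFinEquiv finSumFinEquiv
        (Matrix.fromBlocks (diagonal d) 0 0 (diagonal e)) := by
    rw [fromBlocks_diagonal, reindex_apply, submatrix_diagonal_equiv]
    congr 1
    funext i
    obtain ⟨x | x, rfl⟩ := finSumFinEquiv.surjective i <;> simp
  rw [key, key]
  exact (h₁.fromBlocks h₂).reindex _

end IsCongr

theorem isCongr_diagonal_mul_sq (d c : ι → R) (hc : IsUnit (∏ i, c i)) :
    IsCongr (diagonal d) (diagonal fun i => c i ^ 2 * d i) := by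
  refine ⟨diagonal c, by rwa [det_diagonal], ?_⟩
  rw [diagonal_transpose, diagonal_mul_diagonal, diagonal_mul_diagonal]
  congr 1
  funext i
  ring

theorem isCongr_diagonal_pair_of_mul_sq_add_mul_sq_eq_one {a b x y : R}
    (h : a * x ^ 2 + b * y ^ 2 = 1) :
    IsCongr (diagonal ![a, b]) (diagonal ![1, a * b]) := by
  -- the rows `(x, y)` and `(-b y, a x)` are orthogonal for `diag(a, b)`, of lengths `1` and `a b`
  refine ⟨!![x, y; -(b * y), a * x], ?_, ?_⟩
  · rw [det_fin_two_of]
    convert isUnit_one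
    linear_combination h
  · ext i j
    fin_cases i <;> fin_cases j <;> simp [Matrix.mul_apply, Fin.sum_univ_two, vecMul_diagonal] <;>
      first | linear_combination h | linear_combination a * b * h | ring

theorem IsSymm.exists_isCongr_diagonal {F : Type*} [Field F] [Invertible (2 : F)]
    {M : Matrix ι ι F} (hM : M.IsSymm) : ∃ d : ι → F, IsCongr M (diagonal d) := by
  let b := Pi.basisFun F ι
  let B := M.toBilin b
  obtain ⟨v, hv⟩ := LinearMap.BilinForm.exists_orthogonal_basis
    (LinearMap.BilinForm.isSymm_iff.1 ((Matrix.isSymm_toBilin_iff_isSymm b).2 hM))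
  let w := v.reindex
    ((finCongr (Module.finrank_fintype_fun_eq_card F)).trans (Fintype.equivFin ι).symm)
  have hw : ∀ i j, i ≠ j → B (w i) (w j) = 0 := fun i j hij => by
    simp only [w, Module.Basis.reindex_apply]
    exact hv ((Equiv.injective _).ne hij)
  have := b.invertibleToMatrix w
  refine ⟨fun i => B (w i) (w i), (b.toMatrix w)ᵀ,
    by simpa using isUnit_det_of_invertible (b.toMatrix w), ?_⟩
  rw [transpose_transpose, ← LinearMap.BilinForm.toMatrix_toBilin b M,
    LinearMap.BilinForm.toMatrix_mul_basis_toMatrix]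
  ext i j
  rw [LinearMap.BilinForm.toMatrix_apply]
  rcases eq_or_ne i j with rfl | hij
  · rw [diagonal_apply_eq]
  · rw [diagonal_apply_ne _ hij]
    exact hw i j hij

end Matrix

theorem Fin.snoc_snoc_eq_append {α : Type*} {n : ℕ} (u : Fin n → α) (p q : α) :
    Fin.snoc (Fin.snoc u p) q = Fin.append u ![p, q] := by
  rw [Fin.snoc_eq_append u p, ← Fin.append_snoc]
  congr 1
  ext i
  fin_cases i <;> rfl

namespace FiniteField

variable {F : Type*} [Field F] [Fintype F]

theorem exists_mul_sq_add_mul_sq_eq (hq : Odd (Fintype.card F)) {a b : F} (ha : a ≠ 0)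
    (hb : b ≠ 0) (t : F) : ∃ x y : F, a * x ^ 2 + b * y ^ 2 = t := by
  have hf : (C a * X ^ 2 - C t).degree = 2 := by compute_degree!
  have hg : (C b * X ^ 2).degree = 2 := by compute_degree!
  obtain ⟨x, y, h⟩ := exists_root_sum_quadratic hf hg (Nat.odd_iff.1 hq)
  refine ⟨x, y, ?_⟩
  simp only [eval_sub, eval_mul, eval_pow, eval_C, eval_X] at h
  linear_combination h

theorem isCongr_diagonal_snoc_one_prod (hq : Odd (Fintype.card F)) :
    ∀ {n : ℕ} (d : Fin (n + 1) → F), ∏ i, d i ≠ 0 →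
      (diagonal d).IsCongr (diagonal (Fin.snoc 1 (∏ i, d i)))
  | 0, d, _ => by
    rw [Fin.prod_univ_one]
    convert IsCongr.refl (diagonal d)
    funext i
    fin_cases i
    rfl
  | n + 1, d, hd => by
    obtain ⟨d, a, rfl⟩ : ∃ d' a, d = Fin.snoc d' a :=
      ⟨Fin.init d, d (Fin.last _), (Fin.snoc_init_self d).symm⟩
    rw [Fin.prod_univ_castSucc] at hd ⊢
    simp only [Fin.snoc_castSucc, Fin.snoc_last] at hd ⊢
    obtain ⟨hδ, ha⟩ := mul_ne_zero_iff.1 hd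
    obtain ⟨x, y, hxy⟩ := exists_mul_sq_add_mul_sq_eq hq hδ ha 1
    have h₁ := (isCongr_diagonal_snoc_one_prod hq d hδ).diagonal_append
      (IsCongr.refl (diagonal ![a]))
    have h₂ := (IsCongr.refl (diagonal (1 : Fin n → F))).diagonal_append
      (isCongr_diagonal_pair_of_mul_sq_add_mul_sq_eq_one hxy)
    have hsnoc_one : (Fin.snoc (1 : Fin n → F) 1 : Fin (n + 1) → F) = 1 := by
      funext i
      refine Fin.lastCases ?_ (fun j => ?_) i <;> simp
    rw [Fin.append_right_eq_snoc, Fin.append_right_eq_snoc, cons_val_zero] at h₁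
    rw [← Fin.snoc_snoc_eq_append, ← Fin.snoc_snoc_eq_append, hsnoc_one] at h₂
    exact h₁.trans h₂

theorem isCongr_diagonal_of_prod_eq_sq_mul (hq : Odd (Fintype.card F)) {n : ℕ}
    {d e : Fin n → F} (hd : ∏ i, d i ≠ 0) {c : F} (hc : c ≠ 0)
    (h : ∏ i, e i = c ^ 2 * ∏ i, d i) : (diagonal d).IsCongr (diagonal e) := by
  cases n with
  | zero => exact Subsingleton.elim (diagonal d) (diagonal e) ▸ IsCongr.refl _
  | succ n =>
    have he : ∏ i, e i ≠ 0 := h ▸ mul_ne_zero (pow_ne_zero 2 hc) hd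
    have hscale : (diagonal (Fin.snoc (1 : Fin n → F) (∏ i, d i) : Fin (n + 1) → F)).IsCongr
        (diagonal (Fin.snoc (1 : Fin n → F) (∏ i, e i))) := by
      convert isCongr_diagonal_mul_sq _ (Fin.snoc (1 : Fin n → F) c : Fin (n + 1) → F)
        (by simpa [Fin.prod_univ_castSucc] using hc.isUnit) using 2
      funext i
      refine Fin.lastCases ?_ (fun j => ?_) i <;> simp [h]
    exact ((isCongr_diagonal_snoc_one_prod hq d hd).trans hscale).trans
      (isCongr_diagonal_snoc_one_prod hq e he).symm

theorem isCongr_of_det_eq_sq_mul (hq : Odd (Fintype.card F)) {n : ℕ}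
    {M N : Matrix (Fin n) (Fin n) F} (hM : M.IsSymm) (hN : N.IsSymm) (hMdet : IsUnit M.det)
    {c : F} (hc : c ≠ 0) (h : N.det = c ^ 2 * M.det) : M.IsCongr N := by
  have hchar : ringChar F ≠ 2 := fun h2 => by
    have := even_card_iff_char_two.1 h2
    rw [Nat.odd_iff] at hq
    omega
  have := invertibleOfNonzero (Ring.two_ne_zero hchar)
  obtain ⟨d, hd⟩ := hM.exists_isCongr_diagonal
  obtain ⟨e, he⟩ := hN.exists_isCongr_diagonal
  obtain ⟨a, ha, hMd⟩ := hd.exists_det_eq_sq_mul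
  obtain ⟨b, hb, hNe⟩ := he.exists_det_eq_sq_mul
  rw [det_diagonal] at hMd hNe
  have ha0 := ha.ne_zero
  refine hd.trans ((isCongr_diagonal_of_prod_eq_sq_mul hq ?_ (c := b * c / a) ?_ ?_).trans he.symm)
  · rw [hMd]
    exact mul_ne_zero (pow_ne_zero 2 ha0) hMdet.ne_zero
  · exact div_ne_zero (mul_ne_zero hb.ne_zero hc) ha0
  · rw [hNe, hMd, h]
    field_simp

end FiniteField

theorem equivalence_iff_rank_discriminant_general
    (F : Type*) [Field F] [Fintype F] (hq : Odd (Fintype.card F))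
    (n m : ℕ)
    (M : Matrix (Fin n) (Fin n) F) (hM : M.IsSymm) (hMdet : IsUnit M.det)
    (N : Matrix (Fin m) (Fin m) F) (hN : N.IsSymm) :
    (∃ h : n = m, ∃ A : Matrix (Fin m) (Fin m) F, IsUnit A.det ∧
        A * (Matrix.reindex (finCongr h) (finCongr h) M) * Aᵀ = N) ↔
      (n = m ∧ ∃ c : F, c ≠ 0 ∧ N.det = c ^ 2 * M.det) := by
  constructor
  · rintro ⟨rfl, hMN⟩
    simp only [finCongr_refl, reindex_refl_refl] at hMN
    obtain ⟨c, hc, h⟩ := IsCongr.exists_det_eq_sq_mul hMN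
    exact ⟨rfl, c, hc.ne_zero, h⟩
  · rintro ⟨rfl, c, hc, h⟩
    refine ⟨rfl, ?_⟩
    simp only [finCongr_refl, reindex_refl_refl]
    exact FiniteField.isCongr_of_det_eq_sq_mul hq hM hN hMdet hc h

/-- Over a finite field of odd order, two nondegenerate symmetric bilinear forms
(Gram matrices `M`, `N`) are equivalent iff they have the same dimension and
their discriminants lie in the same square class. -/
theorem equivalence_iff_rank_discriminant
    (F : Type*) [Field F] [Fintype F] (hq : Odd (Fintype.card F))
    (n m : ℕ)
    (M : Matrix (Fin n) (Fin n) F) (hM : M.IsSymm) (hMdet : IsUnit M.det)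
    (N : Matrix (Fin m) (Fin m) F) (hN : N.IsSymm) (hNdet : IsUnit N.det) :
    (∃ h : n = m, ∃ A : Matrix (Fin m) (Fin m) F, IsUnit A.det ∧
        A * (Matrix.reindex (finCongr h) (finCongr h) M) * Aᵀ = N) ↔
      (n = m ∧ ∃ c : F, c ≠ 0 ∧ N.det = c ^ 2 * M.det) :=
  equivalence_iff_rank_discriminant_general F hq n m M hM hMdet N hN
end
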